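/- arXiv:2309.11273 — 6 statements merged into one kernel-verified Lean document; each statement's English description precedes it below -/
import Mathlib

section
/- For every real δ > 0 and every z with 0 ≤ z ≤ δ, the integral of ‖ξ‖² over the spherical cap {ξ ∈ ℝ³ : ‖ξ‖ ≤ δ, ξ₃ ≥ z} (with respect to Lebesgue measure) equals 2π(δ⁵/5 − z δ⁴/4 + z⁵/20). -/
open MeasureTheory Real
open Set

lemma disk_moment (R c : ℝ) (hR : 0 ≤ R) :
    (∫ p : ℝ × ℝ in {p | p.1 ^ 2 + p.2 ^ 2 ≤ R ^ 2}, (p.1 ^ 2 + p.2 ^ 2 + c))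
      = π * (R ^ 4 / 2 + c * R ^ 2) := by
  have hDm : MeasurableSet {p : ℝ × ℝ | p.1 ^ 2 + p.2 ^ 2 ≤ R ^ 2} := by
    apply measurableSet_le <;> fun_prop
  set f : ℝ × ℝ → ℝ := Set.indicator {p : ℝ × ℝ | p.1 ^ 2 + p.2 ^ 2 ≤ R ^ 2}
      (fun p => p.1 ^ 2 + p.2 ^ 2 + c) with hf
  have h1 : (∫ p : ℝ × ℝ in {p | p.1 ^ 2 + p.2 ^ 2 ≤ R ^ 2}, (p.1 ^ 2 + p.2 ^ 2 + c))
      = ∫ p : ℝ × ℝ, f p := (integral_indicator hDm).symm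
  rw [h1, ← integral_comp_polarCoord_symm f, polarCoord_target]
  have key : ∀ p ∈ Ioi (0:ℝ) ×ˢ Ioo (-π) π,
      p.1 • f (polarCoord.symm p)
        = Set.indicator (Ioc 0 R ×ˢ Ioo (-π) π) (fun q : ℝ × ℝ => q.1 ^ 3 + c * q.1) p := by
    rintro ⟨r, θ⟩ ⟨hr, hθ⟩
    simp only [mem_Ioi] at hr
    have hsq : (r * Real.cos θ) ^ 2 + (r * Real.sin θ) ^ 2 = r ^ 2 := by
      have := Real.sin_sq_add_cos_sq θ; nlinarith
    by_cases h : r ≤ R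
    · have hmem : polarCoord.symm (r, θ) ∈ {p : ℝ × ℝ | p.1 ^ 2 + p.2 ^ 2 ≤ R ^ 2} := by
        simp only [polarCoord_symm_apply, mem_setOf_eq, hsq]
        exact pow_le_pow_left₀ hr.le h 2
      rw [hf, Set.indicator_of_mem hmem, Set.indicator_of_mem (by exact ⟨⟨hr, h⟩, hθ⟩)]
      simp only [polarCoord_symm_apply, smul_eq_mul, hsq]
      ring
    · have hmem : polarCoord.symm (r, θ) ∉ {p : ℝ × ℝ | p.1 ^ 2 + p.2 ^ 2 ≤ R ^ 2} := by
        simp only [polarCoord_symm_apply, mem_setOf_eq, hsq, not_le]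
        nlinarith [lt_of_not_ge h]
      rw [hf, Set.indicator_of_notMem hmem, Set.indicator_of_notMem (by
        rintro ⟨⟨_, h'⟩, _⟩; exact h h')]
      simp
  rw [setIntegral_congr_fun (by measurability) key, setIntegral_indicator (by measurability)]
  have hset : (Ioi (0:ℝ) ×ˢ Ioo (-π) π) ∩ (Ioc 0 R ×ˢ Ioo (-π) π) = Ioc 0 R ×ˢ Ioo (-π) π := by
    rw [Set.prod_inter_prod, Set.inter_self, Set.inter_eq_right.2 Set.Ioc_subset_Ioi_self]
  rw [hset]
  have hInt : IntegrableOn (fun q : ℝ × ℝ => q.1 ^ 3 + c * q.1) (Ioc 0 R ×ˢ Ioo (-π) π) := by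
    apply ((Continuous.continuousOn (by fun_prop)).integrableOn_compact
      (isCompact_Icc.prod isCompact_Icc)).mono_set
    exact Set.prod_mono Ioc_subset_Icc_self Ioo_subset_Icc_self
  rw [Measure.volume_eq_prod ℝ ℝ] at hInt ⊢
  rw [setIntegral_prod _ hInt]
  simp only [integral_const, Measure.restrict_apply_univ, Real.volume_Ioo, smul_eq_mul]
  have h2π : (ENNReal.ofReal (π - -π)).toReal = 2 * π := by
    rw [ENNReal.toReal_ofReal (by linarith [Real.pi_pos])]; ring
  rw [measureReal_restrict_apply_univ, Real.volume_real_Ioo,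
    max_eq_left (by linarith [Real.pi_pos]), show π - -π = 2 * π by ring]
  rw [← intervalIntegral.integral_of_le hR]
  have : ∫ r in (0:ℝ)..R, (2 * π) * (r ^ 3 + c * r) = 2 * π * (R ^ 4 / 4 + c * (R ^ 2 / 2)) := by
    rw [intervalIntegral.integral_const_mul, intervalIntegral.integral_add
      ((by fun_prop : Continuous fun x : ℝ => x ^ 3).intervalIntegrable _ _)
      ((by fun_prop : Continuous fun x : ℝ => c * x).intervalIntegrable _ _),
      _root_.integral_pow, intervalIntegral.integral_const_mul, _root_.integral_id]
    norm_num
  rw [this]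
  ring

lemma insertNth_two (a : ℝ) (y : Fin 2 → ℝ) :
    (MeasurableEquiv.piFinSuccAbove (fun _ : Fin 3 => ℝ) 2).symm (a, y)
      = ![y 0, y 1, a] := by
  funext j
  fin_cases j <;> rfl

theorem spherical_cap_second_moment (δ z : ℝ) (hδ : 0 < δ) (hz0 : 0 ≤ z) (hzδ : z ≤ δ) :
    (∫ ξ in {ξ : EuclideanSpace ℝ (Fin 3) | ‖ξ‖ ≤ δ ∧ z ≤ ξ 2}, ‖ξ‖ ^ 2)
      = 2 * π * (δ ^ 5 / 5 - z * δ ^ 4 / 4 + z ^ 5 / 20) := by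
  set W : Set (ℝ × ℝ × ℝ) := {p | p.2.1 ^ 2 + p.2.2 ^ 2 + p.1 ^ 2 ≤ δ ^ 2 ∧ z ≤ p.1} with hW
  set f : ℝ × ℝ × ℝ → ℝ := fun p => p.2.1 ^ 2 + p.2.2 ^ 2 + p.1 ^ 2 with hfdef
  set K : ℝ × ℝ × ℝ → ℝ := W.indicator f with hK
  have hc1 : Continuous f := by fun_prop
  have hc2 : Continuous fun p : ℝ × ℝ × ℝ => p.1 := continuous_fst
  have hWclosed : IsClosed W := by
    have : W = {p : ℝ × ℝ × ℝ | f p ≤ δ ^ 2} ∩ {p : ℝ × ℝ × ℝ | z ≤ p.1} := rfl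
    rw [this]
    exact (isClosed_le hc1 continuous_const).inter (isClosed_le continuous_const hc2)
  have hWbdd : Bornology.IsBounded W := by
    refine (Metric.isBounded_closedBall (x := (0 : ℝ × ℝ × ℝ)) (r := δ)).subset ?_
    rintro ⟨t, a, b⟩ ⟨h1, h2⟩
    rw [Metric.mem_closedBall, dist_zero_right]
    simp only [Prod.norm_def, Real.norm_eq_abs, max_le_iff]
    refine ⟨abs_le.2 ⟨by nlinarith, by nlinarith⟩,
      abs_le.2 ⟨by nlinarith, by nlinarith⟩, abs_le.2 ⟨by nlinarith, by nlinarith⟩⟩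
  have hWcompact : IsCompact W := Metric.isCompact_of_isClosed_isBounded hWclosed hWbdd
  have hWm : MeasurableSet W := hWclosed.measurableSet
  have hKint : Integrable K := by
    rw [hK, integrable_indicator_iff hWm]
    exact hc1.continuousOn.integrableOn_compact hWcompact
  -- Step 1: transfer to ℝ × ℝ × ℝ
  have hSm : MeasurableSet {ξ : EuclideanSpace ℝ (Fin 3) | ‖ξ‖ ≤ δ ∧ z ≤ ξ 2} := by
    have : {ξ : EuclideanSpace ℝ (Fin 3) | ‖ξ‖ ≤ δ ∧ z ≤ ξ 2}
        = {ξ : EuclideanSpace ℝ (Fin 3) | ‖ξ‖ ≤ δ} ∩ {ξ : EuclideanSpace ℝ (Fin 3) | z ≤ ξ 2} :=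
      rfl
    rw [this]
    exact (measurableSet_le continuous_norm.measurable measurable_const).inter
      (measurableSet_le measurable_const ((measurable_pi_apply 2).comp ((MeasurableEquiv.toLp 2 (Fin 3 → ℝ)).symm).measurable))
  have hnorm : ∀ ξ : EuclideanSpace ℝ (Fin 3), ‖ξ‖ ^ 2 = ξ 0 ^ 2 + ξ 1 ^ 2 + ξ 2 ^ 2 := by
    intro ξ
    rw [EuclideanSpace.norm_eq, Real.sq_sqrt (by positivity)]
    simp [Fin.sum_univ_three]
  have hiff : ∀ ξ : EuclideanSpace ℝ (Fin 3),
      (‖ξ‖ ≤ δ) ↔ ξ 0 ^ 2 + ξ 1 ^ 2 + ξ 2 ^ 2 ≤ δ ^ 2 := by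
    intro ξ
    rw [← hnorm ξ]
    constructor <;> intro h <;> nlinarith [norm_nonneg ξ]
  set G : (Fin 3 → ℝ) → ℝ :=
    Set.indicator {x | x 0 ^ 2 + x 1 ^ 2 + x 2 ^ 2 ≤ δ ^ 2 ∧ z ≤ x 2}
      (fun x => x 0 ^ 2 + x 1 ^ 2 + x 2 ^ 2) with hG
  have e2pres := (volume_preserving_piFinSuccAbove (fun _ : Fin 3 => ℝ) 2).symm
  have e3 : MeasurePreserving
      (fun q : ℝ × ℝ × ℝ => (q.1, (MeasurableEquiv.finTwoArrow (α := ℝ)).symm q.2))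
      volume volume :=
    (MeasurePreserving.id volume).prod (volume_preserving_finTwoArrow ℝ).symm
  have step1 : (∫ ξ in {ξ : EuclideanSpace ℝ (Fin 3) | ‖ξ‖ ≤ δ ∧ z ≤ ξ 2}, ‖ξ‖ ^ 2)
      = ∫ q : ℝ × ℝ × ℝ, K q := by
    calc (∫ ξ in {ξ : EuclideanSpace ℝ (Fin 3) | ‖ξ‖ ≤ δ ∧ z ≤ ξ 2}, ‖ξ‖ ^ 2)
        = ∫ ξ : EuclideanSpace ℝ (Fin 3),
            Set.indicator {ξ : EuclideanSpace ℝ (Fin 3) | ‖ξ‖ ≤ δ ∧ z ≤ ξ 2}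
              (fun ξ => ‖ξ‖ ^ 2) ξ := (integral_indicator hSm).symm
      _ = ∫ ξ : EuclideanSpace ℝ (Fin 3), G (((MeasurableEquiv.toLp 2 (Fin 3 → ℝ)).symm) ξ) := by
          refine integral_congr_ae (Filter.Eventually.of_forall fun ξ => ?_)
          have happ : ((MeasurableEquiv.toLp 2 (Fin 3 → ℝ)).symm) ξ = fun i => ξ i := rfl
          beta_reduce
          rw [happ, hG]
          simp only [Set.indicator_apply, mem_setOf_eq, hiff ξ, hnorm ξ]
      _ = ∫ x : Fin 3 → ℝ, G x :=
          (EuclideanSpace.volume_preserving_symm_measurableEquiv_toLp (Fin 3)).integral_comp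
            (MeasurableEquiv.measurableEmbedding _) G
      _ = ∫ p : ℝ × (Fin 2 → ℝ),
            G ((MeasurableEquiv.piFinSuccAbove (fun _ : Fin 3 => ℝ) 2).symm p) :=
          (e2pres.integral_comp (MeasurableEquiv.measurableEmbedding _) G).symm
      _ = ∫ q : ℝ × ℝ × ℝ,
            G ((MeasurableEquiv.piFinSuccAbove (fun _ : Fin 3 => ℝ) 2).symm
              (q.1, (MeasurableEquiv.finTwoArrow (α := ℝ)).symm q.2)) :=
          (e3.integral_comp (MeasurableEquiv.measurableEmbedding
            ((MeasurableEquiv.refl ℝ).prodCongr (MeasurableEquiv.finTwoArrow (α := ℝ)).symm))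
            _).symm
      _ = ∫ q : ℝ × ℝ × ℝ, K q := by
          refine integral_congr_ae (Filter.Eventually.of_forall fun q => ?_)
          have h2 : (MeasurableEquiv.finTwoArrow (α := ℝ)).symm q.2 = ![q.2.1, q.2.2] := by
            funext j; fin_cases j <;> simp [MeasurableEquiv.finTwoArrow]
          beta_reduce
          rw [h2, insertNth_two, hG, hK]
          simp only [Set.indicator_apply, mem_setOf_eq, Matrix.cons_val_zero,
            Matrix.cons_val_one, Matrix.head_cons,
            show (![q.2.1, q.2.2, q.1] : Fin 3 → ℝ) 2 = q.1 from rfl, hW, hfdef]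
  rw [step1]
  rw [Measure.volume_eq_prod ℝ (ℝ × ℝ)] at hKint ⊢
  rw [integral_prod _ hKint]
  have hDm : ∀ R : ℝ, MeasurableSet {p : ℝ × ℝ | p.1 ^ 2 + p.2 ^ 2 ≤ R ^ 2} := by
    intro R; apply measurableSet_le <;> fun_prop
  have inner : ∀ t : ℝ, (∫ y : ℝ × ℝ, K (t, y))
      = Set.indicator (Icc z δ) (fun t => π / 2 * (δ ^ 4 - t ^ 4)) t := by
    intro t
    by_cases ht : t ∈ Icc z δ
    · obtain ⟨ht1, ht2⟩ := ht
      set R := Real.sqrt (δ ^ 2 - t ^ 2) with hR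
      have hR2 : R ^ 2 = δ ^ 2 - t ^ 2 := Real.sq_sqrt (by nlinarith)
      have hKy : ∀ y : ℝ × ℝ, K (t, y)
          = Set.indicator {p : ℝ × ℝ | p.1 ^ 2 + p.2 ^ 2 ≤ R ^ 2}
              (fun p => p.1 ^ 2 + p.2 ^ 2 + t ^ 2) y := by
        intro y
        have hcond : ((t, y) ∈ W) ↔ (y.1 ^ 2 + y.2 ^ 2 ≤ R ^ 2) := by
          rw [hR2, hW]
          constructor
          · rintro ⟨h, _⟩; simp only [mem_setOf_eq] at h ⊢; linarith
          · intro h; exact ⟨by simp only [mem_setOf_eq] at h ⊢; linarith, ht1⟩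
        rw [hK]
        simp only [Set.indicator_apply, hcond, mem_setOf_eq, hfdef]
      simp only [hKy]
      rw [integral_indicator (hDm R), disk_moment R (t ^ 2) (Real.sqrt_nonneg _),
        Set.indicator_of_mem (Set.mem_Icc.2 ⟨ht1, ht2⟩)]
      rw [show R ^ 4 = R ^ 2 * R ^ 2 by ring, hR2]
      ring
    · rw [Set.indicator_of_notMem ht]
      have hzero : ∀ y : ℝ × ℝ, K (t, y) = 0 := by
        intro y
        rw [hK]
        apply Set.indicator_of_notMem
        rintro ⟨h1, h2⟩
        simp only [mem_Icc, not_and_or, not_le] at ht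
        simp only [mem_setOf_eq] at h1 h2
        rcases ht with h | h
        · exact absurd h2 (not_le.2 h)
        · nlinarith [sq_nonneg y.1, sq_nonneg y.2]
      simp only [hzero, integral_zero]
  simp only [inner]
  rw [integral_indicator measurableSet_Icc, integral_Icc_eq_integral_Ioc,
    ← intervalIntegral.integral_of_le hzδ]
  rw [intervalIntegral.integral_const_mul, intervalIntegral.integral_sub
    (intervalIntegrable_const)
    ((by fun_prop : Continuous fun x : ℝ => x ^ 4).intervalIntegrable _ _),
    intervalIntegral.integral_const, _root_.integral_pow]
  simp only [smul_eq_mul]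
  ring
end

section
/- For every real δ > 0 and every z with 0 ≤ z ≤ δ, the ratio ϖ_l(z) = m_l(z)/m, where m_l(z) = ∫_{{ξ∈ℝ³ : ‖ξ‖≤δ, ξ₃≥z}} ‖ξ‖² dξ and m = ∫_{{ξ∈ℝ³ : ‖ξ‖≤δ}} ‖ξ‖² dξ, equals 1/2 − 5z/(8δ) + z⁵/(8δ⁵). -/
/-!
Slice the cap perpendicular to the axis `ξ 2`. At height `t` the slice is the disc
`|y|² ≤ δ² - t²`, and polar coordinates give `∫ (t² + |y|²) dy = π/2 (δ⁴ - t⁴)` over it.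
Integrating over `t ∈ [z, δ]` yields `m_l(z) = π/2 (δ⁴ (δ - z) - (δ⁵ - z⁵)/5)`, and the full
ball is the cap with `z = -δ`, so `m = 4πδ⁵/5`.
-/

open MeasureTheory Real Set

theorem setIntegral_prod_eq_integral_setIntegral_preimage_mk {α β E : Type*}
    [MeasurableSpace α] [MeasurableSpace β] [NormedAddCommGroup E] [NormedSpace ℝ E]
    {μ : Measure α} {ν : Measure β} [SFinite μ] [SFinite ν] {s : Set (α × β)} {f : α × β → E}
    (hs : MeasurableSet s) (hf : IntegrableOn f s (μ.prod ν)) :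
    ∫ p in s, f p ∂μ.prod ν = ∫ x, ∫ y in Prod.mk x ⁻¹' s, f (x, y) ∂ν ∂μ := by
  rw [← integral_indicator hs, integral_prod _ (hf.integrable_indicator hs)]
  congr with x
  rw [← integral_indicator (measurable_prodMk_left hs)]
  rfl

theorem setIntegral_disk_comp_sq_add_sq {E : Type*} [NormedAddCommGroup E] [NormedSpace ℝ E]
    (g : ℝ → E) {ρ : ℝ} (hρ : 0 ≤ ρ) :
    ∫ p in {p : ℝ × ℝ | p.1 ^ 2 + p.2 ^ 2 ≤ ρ ^ 2}, g (p.1 ^ 2 + p.2 ^ 2)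
      = (2 * π) • ∫ r in 0..ρ, r • g (r ^ 2) := by
  have hdisk : MeasurableSet {p : ℝ × ℝ | p.1 ^ 2 + p.2 ^ 2 ≤ ρ ^ 2} :=
    measurableSet_le (by fun_prop) measurable_const
  have hpolar : EqOn
      (fun q : ℝ × ℝ => q.1 • {p : ℝ × ℝ | p.1 ^ 2 + p.2 ^ 2 ≤ ρ ^ 2}.indicator
        (fun p => g (p.1 ^ 2 + p.2 ^ 2)) (polarCoord.symm q))
      (fun q => (Iic ρ).indicator (fun r => r • g (r ^ 2)) q.1) polarCoord.target := by
    rintro ⟨r, θ⟩ ⟨hr, -⟩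
    have hsq : (r * cos θ) ^ 2 + (r * sin θ) ^ 2 = r ^ 2 := by
      linear_combination r ^ 2 * sin_sq_add_cos_sq θ
    have hmem : r ^ 2 ≤ ρ ^ 2 ↔ r ≤ ρ := pow_le_pow_iff_left₀ (le_of_lt hr) hρ two_ne_zero
    simp only [polarCoord_symm_apply, indicator, mem_ofPred_eq, mem_Iic, hsq, hmem]
    split_ifs <;> simp
  rw [← integral_indicator hdisk, ← integral_comp_polarCoord_symm, setIntegral_congr_fun
    polarCoord.open_target.measurableSet hpolar, polarCoord_target, Measure.volume_eq_prod,
    ← Measure.prod_restrict, integral_fun_fst, measureReal_restrict_apply_univ,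
    Real.volume_real_Ioo, integral_indicator measurableSet_Iic, Measure.restrict_restrict
    measurableSet_Iic, Iic_inter_Ioi, ← intervalIntegral.integral_of_le hρ]
  congr 1
  rw [max_eq_left (by linarith [pi_pos])]
  ring

theorem setIntegral_slice_sq_add_sq_add_sq {t R : ℝ} (ht : t ^ 2 ≤ R ^ 2) :
    ∫ y in {y : ℝ × ℝ | t ^ 2 + (y.1 ^ 2 + y.2 ^ 2) ≤ R ^ 2}, (t ^ 2 + (y.1 ^ 2 + y.2 ^ 2))
      = π / 2 * (R ^ 4 - t ^ 4) := by
  set ρ := √(R ^ 2 - t ^ 2)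
  have hρ : ρ ^ 2 = R ^ 2 - t ^ 2 := sq_sqrt (by linarith)
  have hdisk : {y : ℝ × ℝ | t ^ 2 + (y.1 ^ 2 + y.2 ^ 2) ≤ R ^ 2}
      = {y : ℝ × ℝ | y.1 ^ 2 + y.2 ^ 2 ≤ ρ ^ 2} := by
    ext y
    simp only [mem_ofPred_eq, hρ]
    constructor <;> intro h <;> linarith
  have hmoment : ∫ r in 0..ρ, r • (t ^ 2 + r ^ 2) = t ^ 2 * ρ ^ 2 / 2 + ρ ^ 4 / 4 := by
    have hpoly : (fun r : ℝ => r • (t ^ 2 + r ^ 2)) = fun r => t ^ 2 * r ^ 1 + r ^ 3 := by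
      funext r
      rw [smul_eq_mul]
      ring
    rw [hpoly, intervalIntegral.integral_add
      ((intervalIntegral.intervalIntegrable_pow 1).const_mul _)
      (intervalIntegral.intervalIntegrable_pow 3), intervalIntegral.integral_const_mul,
      integral_pow, integral_pow]
    ring
  rw [hdisk, setIntegral_disk_comp_sq_add_sq (fun u => t ^ 2 + u) (sqrt_nonneg _), hmoment,
    smul_eq_mul, show ρ ^ 4 = (ρ ^ 2) ^ 2 by ring, hρ]
  ring

/-- The coordinates `ξ ↦ (ξ 2, ξ 0, ξ 1)`, height along the axis of the cap first. -/
noncomputable def heightPlaneEquiv : EuclideanSpace ℝ (Fin 3) ≃ᵐ ℝ × ℝ × ℝ :=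
  (MeasurableEquiv.toLp 2 (Fin 3 → ℝ)).symm.trans <|
    (MeasurableEquiv.piFinSuccAbove (fun _ => ℝ) 2).trans <|
      MeasurableEquiv.prodCongr (MeasurableEquiv.refl ℝ) MeasurableEquiv.finTwoArrow

theorem measurePreserving_heightPlaneEquiv : MeasurePreserving heightPlaneEquiv :=
  (EuclideanSpace.volume_preserving_symm_measurableEquiv_toLp _).trans <|
    (volume_preserving_piFinSuccAbove (fun _ => ℝ) 2).trans <|
      (MeasurePreserving.id volume).prod (volume_preserving_finTwoArrow ℝ)

theorem heightPlaneEquiv_symm_apply_two (p : ℝ × ℝ × ℝ) : heightPlaneEquiv.symm p 2 = p.1 := rfl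

theorem sq_norm_heightPlaneEquiv_symm (p : ℝ × ℝ × ℝ) :
    ‖heightPlaneEquiv.symm p‖ ^ 2 = p.1 ^ 2 + (p.2.1 ^ 2 + p.2.2 ^ 2) := by
  rw [EuclideanSpace.real_norm_sq_eq, Fin.sum_univ_three]
  change p.2.1 ^ 2 + p.2.2 ^ 2 + p.1 ^ 2 = _
  ring

theorem setIntegral_sq_norm_cap {δ a : ℝ} (ha : -δ ≤ a) (haδ : a ≤ δ) :
    ∫ ξ in {ξ : EuclideanSpace ℝ (Fin 3) | ‖ξ‖ ≤ δ ∧ a ≤ ξ 2}, ‖ξ‖ ^ 2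
      = π / 2 * (δ ^ 4 * (δ - a) - (δ ^ 5 - a ^ 5) / 5) := by
  have hδ : 0 ≤ δ := by linarith
  set cap := {ξ : EuclideanSpace ℝ (Fin 3) | ‖ξ‖ ≤ δ ∧ a ≤ ξ 2}
  set U := {p : ℝ × ℝ × ℝ | p.1 ^ 2 + (p.2.1 ^ 2 + p.2.2 ^ 2) ≤ δ ^ 2 ∧ a ≤ p.1}
  have hU : MeasurableSet U := by
    simp only [U, ofPred_and]
    exact (measurableSet_le (by fun_prop) measurable_const).inter
      (measurableSet_le measurable_const measurable_fst)
  have hpre : heightPlaneEquiv.symm ⁻¹' cap = U := by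
    ext p
    simp only [cap, U, mem_preimage, mem_ofPred_eq, heightPlaneEquiv_symm_apply_two,
      ← sq_norm_heightPlaneEquiv_symm, pow_le_pow_iff_left₀ (norm_nonneg _) hδ two_ne_zero]
  have hint : IntegrableOn (fun ξ : EuclideanSpace ℝ (Fin 3) => ‖ξ‖ ^ 2) cap :=
    ((by fun_prop : Continuous fun ξ : EuclideanSpace ℝ (Fin 3) => ‖ξ‖ ^ 2).continuousOn
      |>.integrableOn_compact (isCompact_closedBall 0 δ)).mono_set
      fun ξ hξ => mem_closedBall_zero_iff.2 hξ.1
  have hmp := measurePreserving_heightPlaneEquiv.symm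
  rw [← hmp.integrableOn_comp_preimage heightPlaneEquiv.symm.measurableEmbedding, hpre] at hint
  have hslice : ∀ t, ∫ y in Prod.mk t ⁻¹' U, (t ^ 2 + (y.1 ^ 2 + y.2 ^ 2))
      = (Icc a δ).indicator (fun t => π / 2 * (δ ^ 4 - t ^ 4)) t := by
    intro t
    by_cases ht : t ∈ Icc a δ
    · have hsec : Prod.mk t ⁻¹' U = {y : ℝ × ℝ | t ^ 2 + (y.1 ^ 2 + y.2 ^ 2) ≤ δ ^ 2} := by
        ext y; simp [U, ht.1]
      rw [hsec, setIntegral_slice_sq_add_sq_add_sq (by nlinarith [ht.1, ht.2]),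
        indicator_of_mem ht]
    · have hsec : Prod.mk t ⁻¹' U = ∅ := by
        refine eq_empty_of_forall_notMem fun y ⟨hy, hat⟩ => ht ⟨hat, ?_⟩
        nlinarith [sq_nonneg y.1, sq_nonneg y.2]
      rw [hsec, Measure.restrict_empty, integral_zero_measure, indicator_of_notMem ht]
  rw [← hmp.setIntegral_preimage_emb heightPlaneEquiv.symm.measurableEmbedding, hpre]
  simp only [Function.comp_def, sq_norm_heightPlaneEquiv_symm] at hint ⊢
  rw [Measure.volume_eq_prod, setIntegral_prod_eq_integral_setIntegral_preimage_mk hU hint]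
  simp only [hslice]
  rw [integral_indicator measurableSet_Icc, integral_Icc_eq_integral_Ioc,
    ← intervalIntegral.integral_of_le haδ]
  rw [intervalIntegral.integral_const_mul, intervalIntegral.integral_sub intervalIntegrable_const
    (intervalIntegral.intervalIntegrable_pow 4), intervalIntegral.integral_const, integral_pow,
    smul_eq_mul]
  ring

theorem spherical_cap_moment_ratio (δ z : ℝ) (hδ : 0 < δ) (hz0 : 0 ≤ z) (hzδ : z ≤ δ) :
    (∫ ξ in {ξ : EuclideanSpace ℝ (Fin 3) | ‖ξ‖ ≤ δ ∧ z ≤ ξ 2}, ‖ξ‖ ^ 2) /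
      (∫ ξ in {ξ : EuclideanSpace ℝ (Fin 3) | ‖ξ‖ ≤ δ}, ‖ξ‖ ^ 2)
      = 1 / 2 - 5 * z / (8 * δ) + z ^ 5 / (8 * δ ^ 5) := by
  have hball : {ξ : EuclideanSpace ℝ (Fin 3) | ‖ξ‖ ≤ δ}
      = {ξ : EuclideanSpace ℝ (Fin 3) | ‖ξ‖ ≤ δ ∧ -δ ≤ ξ 2} := by
    ext ξ
    simp only [mem_ofPred_eq, iff_self_and]
    exact fun h => neg_le_of_abs_le ((PiLp.norm_apply_le ξ 2).trans h)
  rw [setIntegral_sq_norm_cap (by linarith) hzδ, hball,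
    setIntegral_sq_norm_cap le_rfl (by linarith)]
  field_simp
  ring
end

section
/- For every real δ > 0, the integral β = ∫₀^δ ϖ_l(z)² dz, where ϖ_l(z) = (∫_{{ξ∈ℝ³ : ‖ξ‖≤δ, ξ₃≥z}} ‖ξ‖² dξ)/(∫_{{ξ∈ℝ³ : ‖ξ‖≤δ}} ‖ξ‖² dξ), equals 125δ/1848. -/
/-!
Slice the ball perpendicularly to the crack normal: the slice at height `t` is a disc of radius
`√(δ² - t²)`, on which the polar-coordinate formula gives `∫ (t² + ‖y‖²) = π/2 (δ⁴ - t⁴)`.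
Integrating over `t ∈ [z, δ]` gives the cap integral `π/2 (4δ⁵/5 - δ⁴z + z⁵/5)`, and the cap with
`z = -δ` is the whole ball, with integral `4πδ⁵/5`. Hence `ϖ_l(z) = p(z/δ)` with
`p(u) = (4 - 5u + u⁵)/8`, and `β = δ ∫₀¹ p² = 125δ/1848`.
-/

open MeasureTheory Real Metric Set

namespace EuclideanSpace

variable (n : ℕ)

def succAboveEquiv (i : Fin (n + 1)) :
    EuclideanSpace ℝ (Fin (n + 1)) ≃ᵐ ℝ × EuclideanSpace ℝ (Fin n) :=
  (MeasurableEquiv.toLp 2 _).symm.trans <| (MeasurableEquiv.piFinSuccAbove (fun _ => ℝ) i).trans <|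
    MeasurableEquiv.prodCongr (MeasurableEquiv.refl ℝ) (MeasurableEquiv.toLp 2 _)

variable {n}

theorem measurePreserving_succAboveEquiv (i : Fin (n + 1)) :
    MeasurePreserving (succAboveEquiv n i) :=
  (volume_preserving_symm_measurableEquiv_toLp _).trans <|
    (volume_preserving_piFinSuccAbove (fun _ => ℝ) i).trans <|
      (MeasurePreserving.id volume).prod (PiLp.volume_preserving_toLp _)

theorem succAboveEquiv_symm_apply (i : Fin (n + 1)) (t : ℝ) (y : EuclideanSpace ℝ (Fin n)) :
    (succAboveEquiv n i).symm (t, y) = WithLp.toLp 2 (Fin.insertNth i t y.ofLp) :=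
  rfl

@[simp]
theorem succAboveEquiv_symm_apply_self (i : Fin (n + 1)) (t : ℝ) (y : EuclideanSpace ℝ (Fin n)) :
    (succAboveEquiv n i).symm (t, y) i = t := by
  simp [succAboveEquiv_symm_apply]

theorem norm_succAboveEquiv_symm_sq (i : Fin (n + 1)) (t : ℝ) (y : EuclideanSpace ℝ (Fin n)) :
    ‖(succAboveEquiv n i).symm (t, y)‖ ^ 2 = t ^ 2 + ‖y‖ ^ 2 := by
  simp [EuclideanSpace.real_norm_sq_eq, Fin.sum_univ_succAbove _ i, succAboveEquiv_symm_apply]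

theorem integral_eq_integral_integral_succAboveEquiv_symm {F : Type*} [NormedAddCommGroup F]
    [NormedSpace ℝ F] (i : Fin (n + 1)) {f : EuclideanSpace ℝ (Fin (n + 1)) → F}
    (hf : Integrable f) :
    ∫ ξ, f ξ = ∫ t, ∫ y, f ((succAboveEquiv n i).symm (t, y)) := by
  have hmp := (measurePreserving_succAboveEquiv i).symm
  rw [← hmp.integral_comp', Measure.volume_eq_prod, integral_prod]
  rw [← Measure.volume_eq_prod]
  exact hmp.integrable_comp_emb (MeasurableEquiv.measurableEmbedding _) |>.mpr hf

end EuclideanSpace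

section Radial

variable {E : Type*} [NormedAddCommGroup E] [NormedSpace ℝ E] [FiniteDimensional ℝ E]
  [Nontrivial E] [MeasurableSpace E] [BorelSpace E] (μ : Measure E) [μ.IsAddHaarMeasure]

open Module in
theorem integral_closedBall_fun_norm (f : ℝ → ℝ) {r : ℝ} (hr : 0 ≤ r) :
    ∫ x in closedBall (0 : E) r, f ‖x‖ ∂μ
      = finrank ℝ E * μ.real (ball 0 1) * ∫ s in 0..r, s ^ (finrank ℝ E - 1) * f s := by
  have hind : ∀ x : E, (closedBall (0 : E) r).indicator (fun x => f ‖x‖) x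
      = (Iic r).indicator f ‖x‖ := fun x => by
    by_cases h : ‖x‖ ≤ r <;> simp [indicator, h]
  rw [← integral_indicator measurableSet_closedBall, funext hind,
    integral_fun_norm_addHaar μ ((Iic r).indicator f), intervalIntegral.integral_of_le hr,
    ← Ioi_inter_Iic, inter_comm, ← Measure.restrict_restrict measurableSet_Iic,
    ← integral_indicator measurableSet_Iic]
  simp only [smul_eq_mul, nsmul_eq_mul, indicator_mul_right, mul_assoc]

end Radial

theorem integral_closedBall_fin_two_sq_add_norm_sq (t : ℝ) {r : ℝ} (hr : 0 ≤ r) :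
    ∫ y in closedBall (0 : EuclideanSpace ℝ (Fin 2)) r, (t ^ 2 + ‖y‖ ^ 2)
      = π * (t ^ 2 * r ^ 2 + r ^ 4 / 2) := by
  have hradial : ∫ s in (0 : ℝ)..r, s ^ (2 - 1) * (t ^ 2 + s ^ 2)
      = t ^ 2 * r ^ 2 / 2 + r ^ 4 / 4 := by
    simp [mul_add, ← pow_succ', integral_pow]
    ring
  rw [integral_closedBall_fun_norm volume (fun s => t ^ 2 + s ^ 2) hr, finrank_euclideanSpace,
    Fintype.card_fin, hradial, measureReal_def, EuclideanSpace.volume_ball_fin_two,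
    ENNReal.toReal_mul, ENNReal.toReal_pow, ENNReal.toReal_ofReal zero_le_one,
    ENNReal.toReal_ofReal pi_nonneg]
  ring

open EuclideanSpace in
theorem integral_cap_slice (i : Fin 3) {δ z : ℝ} (hzδ : -δ ≤ z) (t : ℝ) :
    ∫ y, {ξ : EuclideanSpace ℝ (Fin 3) | ‖ξ‖ ≤ δ ∧ z ≤ ξ i}.indicator (‖·‖ ^ 2)
        ((succAboveEquiv 2 i).symm (t, y))
      = (Icc z δ).indicator (fun t => π / 2 * (δ ^ 4 - t ^ 4)) t := by
  set S : Set (EuclideanSpace ℝ (Fin 3)) := {ξ | ‖ξ‖ ≤ δ ∧ z ≤ ξ i}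
  have hnorm := norm_succAboveEquiv_symm_sq i t
  by_cases ht : t ∈ Icc z δ
  · have hδ : 0 ≤ δ := by linarith [ht.1, ht.2]
    have hr : 0 ≤ δ ^ 2 - t ^ 2 := by nlinarith [ht.1, ht.2]
    have hdisk : ∀ y, S.indicator (‖·‖ ^ 2) ((succAboveEquiv 2 i).symm (t, y))
        = (closedBall 0 √(δ ^ 2 - t ^ 2)).indicator (fun y => t ^ 2 + ‖y‖ ^ 2) y := by
      intro y
      have hmem : ‖(succAboveEquiv 2 i).symm (t, y)‖ ≤ δ ↔ ‖y‖ ≤ √(δ ^ 2 - t ^ 2) := by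
        rw [Real.le_sqrt (norm_nonneg _) hr,
          ← pow_le_pow_iff_left₀ (norm_nonneg _) hδ two_ne_zero, hnorm]
        constructor <;> intro h <;> linarith
      simp only [S, indicator, mem_ofPred_eq, mem_closedBall_zero_iff,
        succAboveEquiv_symm_apply_self, hmem, ht.1, and_true, hnorm]
    rw [integral_congr_ae (.of_forall hdisk), integral_indicator measurableSet_closedBall,
      integral_closedBall_fin_two_sq_add_norm_sq t (sqrt_nonneg _),
      show 4 = 2 * 2 from rfl, pow_mul, sq_sqrt hr, indicator_of_mem ht]
    ring
  · have hempty : ∀ y, S.indicator (‖·‖ ^ 2) ((succAboveEquiv 2 i).symm (t, y)) = 0 := by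
      refine fun y => indicator_of_notMem ?_ _
      rintro ⟨hle, hzt⟩
      rw [succAboveEquiv_symm_apply_self] at hzt
      have := hnorm y
      exact ht ⟨hzt, by nlinarith [norm_nonneg ((succAboveEquiv 2 i).symm (t, y)), norm_nonneg y]⟩
    simp [hempty, indicator_of_notMem ht]

open EuclideanSpace in
theorem integral_cap_norm_sq (i : Fin 3) {δ z : ℝ} (hzδ : -δ ≤ z) (hz : z ≤ δ) :
    ∫ ξ in {ξ : EuclideanSpace ℝ (Fin 3) | ‖ξ‖ ≤ δ ∧ z ≤ ξ i}, ‖ξ‖ ^ 2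
      = π / 2 * (4 / 5 * δ ^ 5 - δ ^ 4 * z + z ^ 5 / 5) := by
  have hS : MeasurableSet {ξ : EuclideanSpace ℝ (Fin 3) | ‖ξ‖ ≤ δ ∧ z ≤ ξ i} :=
    (measurableSet_le measurable_norm measurable_const).inter
      (measurableSet_le measurable_const
        (by fun_prop : Continuous fun ξ : EuclideanSpace ℝ (Fin 3) => ξ i).measurable)
  have hint : IntegrableOn (‖·‖ ^ 2) {ξ : EuclideanSpace ℝ (Fin 3) | ‖ξ‖ ≤ δ ∧ z ≤ ξ i} :=
    ((by fun_prop : Continuous fun ξ : EuclideanSpace ℝ (Fin 3) => ‖ξ‖ ^ 2).continuousOn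
      |>.integrableOn_compact (isCompact_closedBall 0 δ)).mono_set
      fun ξ hξ => mem_closedBall_zero_iff.2 hξ.1
  rw [← integral_indicator hS, integral_eq_integral_integral_succAboveEquiv_symm i
    ((integrable_indicator_iff hS).2 hint)]
  simp_rw [integral_cap_slice i hzδ]
  rw [integral_indicator measurableSet_Icc, integral_Icc_eq_integral_Ioc,
    ← intervalIntegral.integral_of_le hz]
  simp [mul_sub, integral_pow]
  ring

theorem integral_closedBall_norm_sq {δ : ℝ} (hδ : 0 ≤ δ) :
    ∫ ξ in {ξ : EuclideanSpace ℝ (Fin 3) | ‖ξ‖ ≤ δ}, ‖ξ‖ ^ 2 = 4 / 5 * π * δ ^ 5 := by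
  have hcap : {ξ : EuclideanSpace ℝ (Fin 3) | ‖ξ‖ ≤ δ} = {ξ | ‖ξ‖ ≤ δ ∧ -δ ≤ ξ 2} := by
    ext ξ
    refine ⟨fun h => ⟨h, ?_⟩, And.left⟩
    have := (abs_le.1 ((Real.norm_eq_abs _).symm.trans_le (PiLp.norm_apply_le ξ 2))).1
    linarith [show ‖ξ‖ ≤ δ from h]
  rw [hcap, integral_cap_norm_sq 2 le_rfl (by linarith)]
  ring

noncomputable def capFraction (u : ℝ) : ℝ := (4 - 5 * u + u ^ 5) / 8

theorem integral_capFraction_sq : ∫ u in (0 : ℝ)..1, capFraction u ^ 2 = 125 / 1848 := by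
  have hF : ∀ u : ℝ, HasDerivAt (fun u : ℝ => (16 * u - 20 * u ^ 2 + 25 / 3 * u ^ 3
      + 4 / 3 * u ^ 6 - 10 / 7 * u ^ 7 + u ^ 11 / 11) / 64) (capFraction u ^ 2) u := by
    intro u
    refine (((((((hasDerivAt_id u).const_mul 16).sub ((hasDerivAt_pow 2 u).const_mul 20)).add
      ((hasDerivAt_pow 3 u).const_mul (25 / 3))).add ((hasDerivAt_pow 6 u).const_mul (4 / 3))).sub
      ((hasDerivAt_pow 7 u).const_mul (10 / 7))).add
      ((hasDerivAt_pow 11 u).div_const 11)).div_const 64 |>.congr_deriv ?_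
    norm_num [capFraction]
    ring
  rw [intervalIntegral.integral_eq_sub_of_hasDerivAt (fun u _ => hF u)
    (by apply Continuous.intervalIntegrable; unfold capFraction; fun_prop)]
  norm_num

theorem beta_3d (δ : ℝ) (hδ : 0 < δ) :
    (∫ z in (0:ℝ)..δ,
      ((∫ ξ in {ξ : EuclideanSpace ℝ (Fin 3) | ‖ξ‖ ≤ δ ∧ z ≤ ξ 2}, ‖ξ‖ ^ 2) /
        (∫ ξ in {ξ : EuclideanSpace ℝ (Fin 3) | ‖ξ‖ ≤ δ}, ‖ξ‖ ^ 2)) ^ 2)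
      = 125 * δ / 1848 := by
  have hϖ : EqOn (fun z => ((∫ ξ in {ξ : EuclideanSpace ℝ (Fin 3) | ‖ξ‖ ≤ δ ∧ z ≤ ξ 2}, ‖ξ‖ ^ 2) /
        (∫ ξ in {ξ : EuclideanSpace ℝ (Fin 3) | ‖ξ‖ ≤ δ}, ‖ξ‖ ^ 2)) ^ 2)
      (fun z => capFraction (z / δ) ^ 2) (uIcc 0 δ) := by
    intro z hz
    rw [uIcc_of_le hδ.le] at hz
    dsimp only
    rw [integral_cap_norm_sq 2 (by linarith [hz.1]) hz.2, integral_closedBall_norm_sq hδ.le,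
      capFraction]
    field_simp
    ring
  rw [intervalIntegral.integral_congr hϖ,
    intervalIntegral.integral_comp_div (fun u => capFraction u ^ 2) hδ.ne', zero_div,
    div_self hδ.ne', integral_capFraction_sq, smul_eq_mul]
  ring
end

section
/- For every real δ > 0 and every z with 0 ≤ z ≤ δ, the integral of ‖ξ‖² over the circular segment {ξ ∈ ℝ² : ‖ξ‖ ≤ δ, ξ₂ ≥ z} (with respect to Lebesgue measure) equals (δ⁴/2)·arccos(z/δ) − (z/6)·(δ² − z²)^{3/2} − (z³/2)·√(δ² − z²). -/
/-!
Slice the segment by horizontal chords. The chord at height `y ∈ [z, δ]` is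
`[-√(δ² - y²), √(δ² - y²)] × {y}`, on which `x² + y²` integrates to
`(2/3) (δ² + 2y²) √(δ² - y²)`. This has the primitive
`(y/6) (δ² + 2y²) √(δ² - y²) - (δ⁴/2) arccos (y/δ)`, which vanishes at `y = δ`;
the stated form follows from `(δ² - z²)^{3/2} = (δ² - z²) √(δ² - z²)`.
-/

open MeasureTheory Real Set

theorem setIntegral_prod_eq_integral_setIntegral_preimage {α β E : Type*}
    [MeasurableSpace α] [MeasurableSpace β] [NormedAddCommGroup E] [NormedSpace ℝ E]
    {μ : Measure α} {ν : Measure β}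
    [SFinite μ] [SFinite ν] {f : α × β → E} {S : Set (α × β)} (hS : MeasurableSet S)
    (hf : IntegrableOn f S (μ.prod ν)) :
    ∫ p in S, f p ∂μ.prod ν = ∫ y, ∫ x in (·, y) ⁻¹' S, f (x, y) ∂μ ∂ν := by
  rw [← integral_indicator hS, integral_prod_symm _ (hf.integrable_indicator hS)]
  congr 1 with y
  rw [← integral_indicator (measurable_prodMk_right hS)]
  rfl

theorem EuclideanSpace.setIntegral_fin_two {E : Type*} [NormedAddCommGroup E]
    [NormedSpace ℝ E] (f : ℝ × ℝ → E) (T : Set (ℝ × ℝ)) :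
    ∫ ξ in {ξ : EuclideanSpace ℝ (Fin 2) | (ξ 0, ξ 1) ∈ T}, f (ξ 0, ξ 1) = ∫ p in T, f p := by
  let e := (MeasurableEquiv.toLp 2 (Fin 2 → ℝ)).symm.trans
    (MeasurableEquiv.finTwoArrow (α := ℝ))
  have he : MeasurePreserving e :=
    (EuclideanSpace.volume_preserving_symm_measurableEquiv_toLp _).trans
      (volume_preserving_finTwoArrow ℝ)
  exact he.setIntegral_preimage_emb e.measurableEmbedding f T

theorem integral_sq_add_const_neg_self (s c : ℝ) :
    ∫ x in -s..s, (x ^ 2 + c) = 2 / 3 * s ^ 3 + 2 * c * s := by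
  rw [intervalIntegral.integral_add ((continuous_pow 2).intervalIntegrable _ _)
    intervalIntegrable_const, integral_pow, intervalIntegral.integral_const, smul_eq_mul]
  ring

theorem hasDerivAt_sqrt_sub_sq {a y : ℝ} (hy : y ^ 2 < a) :
    HasDerivAt (fun t => √(a - t ^ 2)) (-y / √(a - y ^ 2)) y := by
  have := ((hasDerivAt_pow 2 y).const_sub a).sqrt (by linarith)
  convert this using 1
  ring

theorem hasDerivAt_arccos_div {δ y : ℝ} (hy : y ∈ Ioo (-δ) δ) :
    HasDerivAt (fun t => arccos (t / δ)) (-1 / √(δ ^ 2 - y ^ 2)) y := by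
  obtain ⟨hy₁, hy₂⟩ := hy
  have hδ : 0 < δ := by linarith
  refine ((hasDerivAt_arccos (x := y / δ) (by rw [ne_eq, div_eq_iff hδ.ne']; linarith)
    (by rw [ne_eq, div_eq_iff hδ.ne']; linarith)).comp y
    ((hasDerivAt_id y).div_const δ)).congr_deriv ?_
  rw [show 1 - (y / δ) ^ 2 = (δ ^ 2 - y ^ 2) / δ ^ 2 by field_simp, sqrt_div' _ (by positivity),
    sqrt_sq hδ.le]
  field_simp

def circularSegment (δ z : ℝ) : Set (ℝ × ℝ) :=
  {p | p.1 ^ 2 + p.2 ^ 2 ≤ δ ^ 2 ∧ z ≤ p.2}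

section CircularSegment

variable {δ z y : ℝ}

theorem isCompact_circularSegment : IsCompact (circularSegment δ z) := by
  refine Metric.isCompact_of_isClosed_isBounded ?_
    ((Metric.isBounded_closedBall (x := 0) (r := |δ|)).subset ?_)
  · exact (isClosed_le (f := fun p : ℝ × ℝ => p.1 ^ 2 + p.2 ^ 2) (by fun_prop)
      continuous_const).inter (isClosed_le continuous_const continuous_snd)
  · rintro p ⟨hp, -⟩
    rw [Metric.mem_closedBall, dist_zero_right, Prod.norm_def, max_le_iff, Real.norm_eq_abs,
      Real.norm_eq_abs, ← sq_le_sq, ← sq_le_sq]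
    constructor <;> nlinarith [sq_nonneg p.1, sq_nonneg p.2]

theorem mk_preimage_circularSegment_of_mem (hz : -δ ≤ z) (hy : y ∈ Icc z δ) :
    (·, y) ⁻¹' circularSegment δ z = Icc (-√(δ ^ 2 - y ^ 2)) √(δ ^ 2 - y ^ 2) := by
  ext x
  rw [mem_Icc, ← Real.sq_le (by nlinarith [hy.1, hy.2])]
  show x ^ 2 + y ^ 2 ≤ δ ^ 2 ∧ z ≤ y ↔ _
  constructor
  · exact fun h => by linarith [h.1]
  · exact fun h => ⟨by linarith, hy.1⟩

theorem mk_preimage_circularSegment_of_notMem (hδ : 0 ≤ δ) (hy : y ∉ Icc z δ) :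
    (·, y) ⁻¹' circularSegment δ z = ∅ :=
  eq_empty_of_forall_notMem fun x ⟨hxy, hzy⟩ => hy ⟨hzy, by nlinarith⟩

theorem setIntegral_circularSegment (hz : -δ ≤ z) (hzδ : z ≤ δ) :
    ∫ p in circularSegment δ z, (p.1 ^ 2 + p.2 ^ 2)
      = ∫ y in z..δ, 2 / 3 * (δ ^ 2 + 2 * y ^ 2) * √(δ ^ 2 - y ^ 2) := by
  have hint : IntegrableOn (fun p : ℝ × ℝ => p.1 ^ 2 + p.2 ^ 2) (circularSegment δ z) :=
    (by fun_prop : Continuous fun p : ℝ × ℝ => p.1 ^ 2 + p.2 ^ 2).continuousOn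
      |>.integrableOn_compact isCompact_circularSegment
  rw [intervalIntegral.integral_of_le hzδ, ← integral_Icc_eq_integral_Ioc,
    ← integral_indicator measurableSet_Icc, Measure.volume_eq_prod,
    setIntegral_prod_eq_integral_setIntegral_preimage isCompact_circularSegment.measurableSet hint]
  congr 1 with y
  by_cases hy : y ∈ Icc z δ
  · have hs : √(δ ^ 2 - y ^ 2) ^ 2 = δ ^ 2 - y ^ 2 := sq_sqrt (by nlinarith [hy.1, hy.2])
    rw [mk_preimage_circularSegment_of_mem hz hy, indicator_of_mem hy,
      integral_Icc_eq_integral_Ioc,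
      ← intervalIntegral.integral_of_le (by linarith [sqrt_nonneg (δ ^ 2 - y ^ 2)])]
    dsimp only
    rw [integral_sq_add_const_neg_self]
    linear_combination (2 / 3 * √(δ ^ 2 - y ^ 2)) * hs
  · rw [mk_preimage_circularSegment_of_notMem (by linarith) hy, indicator_of_notMem hy,
      Measure.restrict_empty, integral_zero_measure]

theorem hasDerivAt_chordMoment_primitive (hy : y ∈ Ioo (-δ) δ) :
    HasDerivAt
      (fun t => t / 6 * (δ ^ 2 + 2 * t ^ 2) * √(δ ^ 2 - t ^ 2) - δ ^ 4 / 2 * arccos (t / δ))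
      (2 / 3 * (δ ^ 2 + 2 * y ^ 2) * √(δ ^ 2 - y ^ 2)) y := by
  have hpoly :
      HasDerivAt (fun t => t / 6 * (δ ^ 2 + 2 * t ^ 2)) ((δ ^ 2 + 6 * y ^ 2) / 6) y := by
    refine (((hasDerivAt_id y).div_const 6).mul
      (((hasDerivAt_pow 2 y).const_mul 2).const_add _)).congr_deriv ?_
    simp only [id]
    ring
  have hy₂ : y ^ 2 < δ ^ 2 := sq_lt_sq' hy.1 hy.2
  refine ((hpoly.mul (hasDerivAt_sqrt_sub_sq hy₂)).sub
    ((hasDerivAt_arccos_div hy).const_mul _)).congr_deriv ?_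
  have hs : 0 < √(δ ^ 2 - y ^ 2) := sqrt_pos.2 (by linarith)
  have hs₂ : √(δ ^ 2 - y ^ 2) ^ 2 = δ ^ 2 - y ^ 2 := sq_sqrt (by linarith)
  field_simp
  linear_combination (-18 * δ ^ 2 - 12 * y ^ 2) * hs₂

theorem integral_chordMoment (hδ : 0 < δ) (hz : -δ ≤ z) (hzδ : z ≤ δ) :
    ∫ y in z..δ, 2 / 3 * (δ ^ 2 + 2 * y ^ 2) * √(δ ^ 2 - y ^ 2)
      = δ ^ 4 / 2 * arccos (z / δ) - z / 6 * (δ ^ 2 + 2 * z ^ 2) * √(δ ^ 2 - z ^ 2) := by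
  rw [intervalIntegral.integral_eq_sub_of_hasDerivAt_of_le hzδ (by fun_prop)
    (fun y hy => hasDerivAt_chordMoment_primitive ⟨by linarith [hy.1], hy.2⟩)
    ((by fun_prop : Continuous _).intervalIntegrable _ _)]
  simp [div_self hδ.ne']

end CircularSegment

theorem circular_segment_second_moment (δ z : ℝ) (hδ : 0 < δ) (hz0 : 0 ≤ z) (hzδ : z ≤ δ) :
    (∫ ξ in {ξ : EuclideanSpace ℝ (Fin 2) | ‖ξ‖ ≤ δ ∧ z ≤ ξ 1}, ‖ξ‖ ^ 2)
      = (δ ^ 4 / 2) * Real.arccos (z / δ)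
        - (z / 6) * (δ ^ 2 - z ^ 2) ^ ((3 : ℝ) / 2)
        - (z ^ 3 / 2) * Real.sqrt (δ ^ 2 - z ^ 2) := by
  have hnorm (ξ : EuclideanSpace ℝ (Fin 2)) : ‖ξ‖ ^ 2 = ξ 0 ^ 2 + ξ 1 ^ 2 := by
    rw [EuclideanSpace.real_norm_sq_eq, Fin.sum_univ_two]
  have hsegment : {ξ : EuclideanSpace ℝ (Fin 2) | ‖ξ‖ ≤ δ ∧ z ≤ ξ 1}
      = {ξ | (ξ 0, ξ 1) ∈ circularSegment δ z} := by
    ext ξ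
    show _ ∧ _ ↔ _ ∧ _
    rw [← hnorm, sq_le_sq₀ (norm_nonneg ξ) hδ.le]
  have hpow : (δ ^ 2 - z ^ 2) ^ ((3 : ℝ) / 2) = (δ ^ 2 - z ^ 2) * √(δ ^ 2 - z ^ 2) := by
    rw [show (3 : ℝ) / 2 = 1 + 1 / 2 by norm_num, rpow_one_add' (by nlinarith) (by norm_num),
      ← sqrt_eq_rpow]
  simp_rw [hsegment, hnorm]
  rw [EuclideanSpace.setIntegral_fin_two (fun p => p.1 ^ 2 + p.2 ^ 2),
    setIntegral_circularSegment (by linarith) hzδ, integral_chordMoment hδ (by linarith) hzδ,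
    hpow]
  ring
end

section
/- For every real δ > 0, the integral β′ = ∫₀^δ ϖ_l(z) dz, where ϖ_l(z) = (∫_{{ξ∈ℝ² : ‖ξ‖≤δ, ξ₂≥z}} ‖ξ‖² dξ)/(∫_{{ξ∈ℝ² : ‖ξ‖≤δ}} ‖ξ‖² dξ), equals 4δ/(5π). -/
/-!
Integrating in `z` first, a point `ξ` of the disc lies in the cap `{ξ₂ ≥ z}` for exactly the
`z ∈ (0, δ]` with `z ≤ ξ₂`, so `∫₀^δ m_l(z) dz = ∫_{‖ξ‖ ≤ δ} ‖ξ‖² ξ₂⁺ dξ`. In polar coordinates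
this is `∫₀^δ r⁴ dr · ∫_{-π}^{π} sin⁺ θ dθ = 2δ⁵/5`, while `m = ∫₀^δ r³ dr · 2π = πδ⁴/2`.
-/

open MeasureTheory Real Set

theorem setIntegral_Ioo_neg_pi_pi_max_sin_zero : ∫ θ in Ioo (-π) π, max (sin θ) 0 = 2 := by
  have hcont : Continuous fun θ => max (sin θ) 0 := continuous_sin.max continuous_const
  have hneg : ∫ θ in (-π)..0, max (sin θ) 0 = ∫ θ in (-π)..0, (0 : ℝ) :=
    intervalIntegral.integral_congr fun θ hθ => by
      rw [uIcc_of_le (neg_nonpos.2 pi_pos.le)] at hθ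
      exact max_eq_right (sin_nonpos_of_nonpos_of_neg_pi_le hθ.2 hθ.1)
  have hpos : ∫ θ in 0..π, max (sin θ) 0 = ∫ θ in 0..π, sin θ :=
    intervalIntegral.integral_congr fun θ hθ => by
      rw [uIcc_of_le pi_pos.le] at hθ
      exact max_eq_left (sin_nonneg_of_nonneg_of_le_pi hθ.1 hθ.2)
  rw [← integral_Ioc_eq_integral_Ioo, ← intervalIntegral.integral_of_le (by linarith [pi_pos]),
    ← intervalIntegral.integral_add_adjacent_intervals (b := 0) (hcont.intervalIntegrable _ _)
      (hcont.intervalIntegrable _ _), hneg, hpos]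
  norm_num

theorem setIntegral_Ioi_indicator_Iic_pow {δ : ℝ} (hδ : 0 ≤ δ) (k : ℕ) :
    ∫ r in Ioi 0, (Iic δ).indicator (· ^ k) r = δ ^ (k + 1) / (k + 1) := by
  rw [setIntegral_indicator measurableSet_Iic, Ioi_inter_Iic,
    ← intervalIntegral.integral_of_le hδ, integral_pow]
  simp

theorem integral_Ioc_setIntegral_superlevel_eq {α : Type*} [MeasurableSpace α] {μ : Measure α}
    [SFinite μ] {S : Set α} {f h : α → ℝ} {δ : ℝ} (hS : MeasurableSet S) (hh : Measurable h)
    (hf : IntegrableOn f S μ) (hhδ : ∀ x ∈ S, h x ≤ δ) :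
    ∫ z in Ioc 0 δ, (∫ x in S ∩ {x | z ≤ h x}, f x ∂μ) = ∫ x in S, max (h x) 0 * f x ∂μ := by
  have hsection : ∀ x ∈ S, ∫ z in Ioc 0 δ, {x | z ≤ h x}.indicator f x = max (h x) 0 * f x := by
    intro x hx
    have hind : (fun z => {x | z ≤ h x}.indicator f x) = (Iic (h x)).indicator fun _ => f x := rfl
    rw [hind, setIntegral_indicator measurableSet_Iic, Ioc_inter_Iic, min_eq_right (hhδ x hx),
      setIntegral_const, volume_real_Ioc, sub_zero, smul_eq_mul]
  have hint : Integrable (fun q : ℝ × α => {q : ℝ × α | q.1 ≤ h q.2}.indicator (f ·.2) q)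
      ((volume.restrict (Ioc 0 δ)).prod (μ.restrict S)) :=
    (hf.comp_snd _).indicator (measurableSet_le measurable_fst (hh.comp measurable_snd))
  calc ∫ z in Ioc 0 δ, (∫ x in S ∩ {x | z ≤ h x}, f x ∂μ)
      = ∫ z in Ioc 0 δ, (∫ x in S, {x | z ≤ h x}.indicator f x ∂μ) := by
        simp_rw [setIntegral_indicator (measurableSet_le measurable_const hh)]
    _ = ∫ x in S, (∫ z in Ioc 0 δ, {x | z ≤ h x}.indicator f x) ∂μ := integral_integral_swap hint
    _ = ∫ x in S, max (h x) 0 * f x ∂μ := setIntegral_congr_fun hS hsection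

namespace EuclideanSpace

theorem integral_fin_two_eq_polar {E : Type*} [NormedAddCommGroup E] [NormedSpace ℝ E]
    (f : EuclideanSpace ℝ (Fin 2) → E) :
    ∫ ξ, f ξ = ∫ p in Ioi 0 ×ˢ Ioo (-π) π, p.1 • f !₂[p.1 * cos p.2, p.1 * sin p.2] := by
  rw [← Complex.orthonormalBasisOneI.repr.measurePreserving.integral_comp
    Complex.orthonormalBasisOneI.repr.toHomeomorph.measurableEmbedding,
    ← Complex.integral_comp_polarCoord_symm, polarCoord_target]
  congr! 4

theorem norm_polar_fin_two {r : ℝ} (hr : 0 ≤ r) (θ : ℝ) :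
    ‖!₂[r * cos θ, r * sin θ]‖ = r := by
  rw [EuclideanSpace.norm_eq, Fin.sum_univ_two]
  simp [mul_pow, ← mul_add, sqrt_sq hr]

theorem setIntegral_norm_le_of_polar_homogeneous {δ : ℝ} (hδ : 0 ≤ δ) (n : ℕ)
    {f : EuclideanSpace ℝ (Fin 2) → ℝ} {a : ℝ → ℝ}
    (hf : ∀ r > 0, ∀ θ, f !₂[r * cos θ, r * sin θ] = r ^ n * a θ) :
    ∫ ξ in {ξ | ‖ξ‖ ≤ δ}, f ξ = δ ^ (n + 2) / (n + 2) * ∫ θ in Ioo (-π) π, a θ := by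
  have hpolar : ∀ p ∈ Ioi 0 ×ˢ Ioo (-π) π,
      p.1 • {ξ : EuclideanSpace ℝ (Fin 2) | ‖ξ‖ ≤ δ}.indicator f !₂[p.1 * cos p.2, p.1 * sin p.2]
        = (Iic δ).indicator (· ^ (n + 1)) p.1 * a p.2 := by
    rintro ⟨r, θ⟩ ⟨hr, -⟩
    simp only [indicator_apply, mem_ofPred_eq, norm_polar_fin_two hr.le, mem_Iic]
    split_ifs
    · rw [hf r hr, smul_eq_mul, pow_succ]; ring
    · simp
  rw [← integral_indicator (measurableSet_le measurable_norm measurable_const),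
    integral_fin_two_eq_polar,
    setIntegral_congr_fun (measurableSet_Ioi.prod measurableSet_Ioo) hpolar,
    Measure.volume_eq_prod, setIntegral_prod_mul, setIntegral_Ioi_indicator_Iic_pow hδ]
  push_cast; ring

theorem setIntegral_norm_sq_disc {δ : ℝ} (hδ : 0 ≤ δ) :
    ∫ ξ in {ξ : EuclideanSpace ℝ (Fin 2) | ‖ξ‖ ≤ δ}, ‖ξ‖ ^ 2 = π * δ ^ 4 / 2 := by
  rw [setIntegral_norm_le_of_polar_homogeneous hδ 2 (a := fun _ => 1)
    fun r hr θ => by rw [norm_polar_fin_two hr.le]; ring, setIntegral_const,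
    volume_real_Ioo_of_le (by linarith [pi_pos])]
  ring

theorem integral_setIntegral_norm_sq_cap {δ : ℝ} (hδ : 0 ≤ δ) :
    ∫ z in (0:ℝ)..δ, (∫ ξ in {ξ : EuclideanSpace ℝ (Fin 2) | ‖ξ‖ ≤ δ ∧ z ≤ ξ 1}, ‖ξ‖ ^ 2)
      = 2 * δ ^ 5 / 5 := by
  have hdisc : {ξ : EuclideanSpace ℝ (Fin 2) | ‖ξ‖ ≤ δ} = Metric.closedBall 0 δ := by
    ext; simp
  have hint : IntegrableOn (fun ξ : EuclideanSpace ℝ (Fin 2) => ‖ξ‖ ^ 2) {ξ | ‖ξ‖ ≤ δ} :=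
    hdisc ▸ (continuous_norm.pow 2).continuousOn.integrableOn_compact (isCompact_closedBall _ _)
  have hpolar : ∀ r > 0, ∀ θ, max (!₂[r * cos θ, r * sin θ] 1) 0 * ‖!₂[r * cos θ, r * sin θ]‖ ^ 2
      = r ^ 3 * max (sin θ) 0 := fun r hr θ => by
    have hmax : max (r * sin θ) 0 = r * max (sin θ) 0 := by
      rw [mul_max_of_nonneg _ _ hr.le, mul_zero]
    simp [norm_polar_fin_two hr.le, hmax]
    ring
  rw [intervalIntegral.integral_of_le hδ]
  refine (integral_Ioc_setIntegral_superlevel_eq (h := fun ξ => ξ 1)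
    (measurableSet_le measurable_norm measurable_const) (by fun_prop) hint
    fun ξ hξ => (le_abs_self _).trans ((PiLp.norm_apply_le ξ 1).trans hξ)).trans ?_
  rw [setIntegral_norm_le_of_polar_homogeneous hδ 3 hpolar,
    setIntegral_Ioo_neg_pi_pi_max_sin_zero]
  ring

end EuclideanSpace

theorem beta_prime_2d (δ : ℝ) (hδ : 0 < δ) :
    (∫ z in (0:ℝ)..δ,
      (∫ ξ in {ξ : EuclideanSpace ℝ (Fin 2) | ‖ξ‖ ≤ δ ∧ z ≤ ξ 1}, ‖ξ‖ ^ 2) /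
        (∫ ξ in {ξ : EuclideanSpace ℝ (Fin 2) | ‖ξ‖ ≤ δ}, ‖ξ‖ ^ 2))
      = 4 * δ / (5 * π) := by
  rw [intervalIntegral.integral_div, EuclideanSpace.integral_setIntegral_norm_sq_cap hδ.le,
    EuclideanSpace.setIntegral_norm_sq_disc hδ.le]
  field_simp
  ring
end

section
/- Let δ > 0 and let κ, μ₀, G_c be real numbers with D := (9κ − 15μ₀)·(125δ/1848) + 15μ₀·(5δ/24) > 0 and G_c ≥ 0, and set s_c = √(G_c/D). Define ϖ_l : [0, δ] → ℝ by ϖ_l(z) = (∫_{{ξ∈ℝ³ : ‖ξ‖≤δ, ξ₃≥z}} ‖ξ‖² dξ)/(∫_{{ξ∈ℝ³ : ‖ξ‖≤δ}} ‖ξ‖² dξ). Then the energy balance 2·∫₀^δ (3/2)·[(3κ − 5μ₀)ϖ_l(z)² + 5μ₀ϖ_l(z)]·s_c² dz = G_c holds. -/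
open MeasureTheory Real Set

/-!
Slicing the cap `{‖ξ‖ ≤ δ, ξ₃ ≥ z}` at height `t` gives a disk of squared radius `δ² - t²`,
over which `t² + |q|²` integrates to `π/2 (δ⁴ - t⁴)` in polar coordinates. Integrating over
`t ∈ [z, δ]`, the second moment of the cap is `π/2 (4δ⁵/5 - δ⁴z + z⁵/5)`, and `z = -δ` gives
the ball. Hence `ϖ_l(z) = p(z/δ)` with `p(u) = 1/2 - 5u/8 + u⁵/8`, and `∫₀¹ p = 5/24`,
`∫₀¹ p² = 125/1848` give `β' = 5δ/24` and `β = 125δ/1848`, the constants in `s_c`.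
-/

noncomputable section

def capMomentRatio (u : ℝ) : ℝ := 1 / 2 - 5 * u / 8 + u ^ 5 / 8

theorem continuous_capMomentRatio : Continuous capMomentRatio := by
  unfold capMomentRatio
  fun_prop

theorem integral_capMomentRatio : ∫ u in (0 : ℝ)..1, capMomentRatio u = 5 / 24 := by
  have hF : ∀ x ∈ uIcc (0 : ℝ) 1,
      HasDerivAt (fun u : ℝ => u / 2 - 5 * u ^ 2 / 16 + u ^ 6 / 48) (capMomentRatio x) x := by
    intro x _
    refine ((((hasDerivAt_id x).div_const 2).sub
      (((hasDerivAt_pow 2 x).const_mul 5).div_const 16)).add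
      ((hasDerivAt_pow 6 x).div_const 48)).congr_deriv ?_
    norm_num [capMomentRatio]
    ring
  rw [intervalIntegral.integral_eq_sub_of_hasDerivAt hF
    (continuous_capMomentRatio.intervalIntegrable _ _)]
  norm_num

theorem integral_capMomentRatio_sq : ∫ u in (0 : ℝ)..1, capMomentRatio u ^ 2 = 125 / 1848 := by
  have hF : ∀ x ∈ uIcc (0 : ℝ) 1, HasDerivAt
      (fun u : ℝ => u / 4 - 5 * u ^ 2 / 16 + 25 * u ^ 3 / 192 + u ^ 6 / 48
        - 5 * u ^ 7 / 224 + u ^ 11 / 704)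
      (capMomentRatio x ^ 2) x := by
    intro x _
    refine ((((((hasDerivAt_id x).div_const 4).sub
      (((hasDerivAt_pow 2 x).const_mul 5).div_const 16)).add
      (((hasDerivAt_pow 3 x).const_mul 25).div_const 192)).add
      ((hasDerivAt_pow 6 x).div_const 48)).sub
      (((hasDerivAt_pow 7 x).const_mul 5).div_const 224)).add
      ((hasDerivAt_pow 11 x).div_const 704) |>.congr_deriv ?_
    norm_num [capMomentRatio]
    ring
  rw [intervalIntegral.integral_eq_sub_of_hasDerivAt hF
    ((continuous_capMomentRatio.pow 2).intervalIntegrable _ _)]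
  norm_num

theorem integral_capMomentRatio_combination (a b δ : ℝ) :
    ∫ z in (0 : ℝ)..δ, a * capMomentRatio (z / δ) ^ 2 + b * capMomentRatio (z / δ)
      = (a * (125 / 1848) + b * (5 / 24)) * δ := by
  rcases eq_or_ne δ 0 with rfl | hδ
  · simp
  have hsq : IntervalIntegrable (fun u => a * capMomentRatio u ^ 2) volume 0 1 :=
    ((continuous_capMomentRatio.pow 2).const_mul a).intervalIntegrable _ _
  have hlin : IntervalIntegrable (fun u => b * capMomentRatio u) volume 0 1 :=
    (continuous_capMomentRatio.const_mul b).intervalIntegrable _ _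
  rw [intervalIntegral.integral_comp_div
      (fun u => a * capMomentRatio u ^ 2 + b * capMomentRatio u) hδ,
    zero_div, div_self hδ, intervalIntegral.integral_add hsq hlin,
    intervalIntegral.integral_const_mul, intervalIntegral.integral_const_mul,
    integral_capMomentRatio_sq, integral_capMomentRatio, smul_eq_mul]
  ring

theorem setIntegral_disk (a ρ : ℝ) (hρ : 0 ≤ ρ) :
    ∫ q in {q : ℝ × ℝ | q.1 ^ 2 + q.2 ^ 2 ≤ ρ}, a + q.1 ^ 2 + q.2 ^ 2
      = π * (a * ρ + ρ ^ 2 / 2) := by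
  have hdisk : MeasurableSet {q : ℝ × ℝ | q.1 ^ 2 + q.2 ^ 2 ≤ ρ} :=
    measurableSet_le (by fun_prop) measurable_const
  have hradial : MeasurableSet {r : ℝ | r ^ 2 ≤ ρ} :=
    measurableSet_le (by fun_prop) measurable_const
  have hpolar : ∀ p : ℝ × ℝ, (p.1 * cos p.2) ^ 2 + (p.1 * sin p.2) ^ 2 = p.1 ^ 2 := fun p => by
    linear_combination p.1 ^ 2 * cos_sq_add_sin_sq p.2
  have hintegrand : ∀ p : ℝ × ℝ,
      p.1 • {q : ℝ × ℝ | q.1 ^ 2 + q.2 ^ 2 ≤ ρ}.indicator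
        (fun q => a + q.1 ^ 2 + q.2 ^ 2) (polarCoord.symm p)
      = {r : ℝ | r ^ 2 ≤ ρ}.indicator (fun r => r * (a + r ^ 2)) p.1 * 1 := by
    intro p
    rw [polarCoord_symm_apply]
    by_cases h : p.1 ^ 2 ≤ ρ
    · rw [indicator_of_mem (by simpa [hpolar p] using h),
        indicator_of_mem (show p.1 ∈ {r : ℝ | r ^ 2 ≤ ρ} from h), smul_eq_mul]
      linear_combination p.1 * hpolar p
    · rw [indicator_of_notMem (by simpa [hpolar p] using h),
        indicator_of_notMem (show p.1 ∉ {r : ℝ | r ^ 2 ≤ ρ} from h)]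
      simp
  have hradius : Ioi (0 : ℝ) ∩ {r : ℝ | r ^ 2 ≤ ρ} = Ioc 0 (√ρ) := by
    ext r
    simp only [mem_inter_iff, mem_Ioi, mem_ofPred_eq, mem_Ioc, and_congr_right_iff]
    exact fun hr => (le_sqrt hr.le hρ).symm
  have hF : ∀ x ∈ uIcc 0 √ρ,
      HasDerivAt (fun r => a * r ^ 2 / 2 + r ^ 4 / 4) (x * (a + x ^ 2)) x := by
    intro x _
    refine ((((hasDerivAt_pow 2 x).const_mul a).div_const 2).add
      ((hasDerivAt_pow 4 x).div_const 4)).congr_deriv ?_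
    norm_num
    ring
  rw [← integral_indicator hdisk, ← integral_comp_polarCoord_symm]
  simp_rw [hintegrand]
  rw [polarCoord_target, Measure.volume_eq_prod,
    setIntegral_prod_mul (fun r => {r : ℝ | r ^ 2 ≤ ρ}.indicator (fun r => r * (a + r ^ 2)) r)
      (fun _ => (1 : ℝ)), setIntegral_const,
    setIntegral_indicator hradial, hradius, ← intervalIntegral.integral_of_le (sqrt_nonneg ρ),
    intervalIntegral.integral_eq_sub_of_hasDerivAt hF
      (Continuous.intervalIntegrable (by fun_prop) _ _),
    Real.volume_real_Ioo_of_le (by linarith [pi_pos])]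
  have hρ2 : √ρ ^ 4 = ρ ^ 2 := by rw [show 4 = 2 * 2 from rfl, pow_mul, sq_sqrt hρ]
  rw [hρ2, sq_sqrt hρ]
  simp only [smul_eq_mul]
  ring

def sphericalCap (δ z : ℝ) : Set (ℝ × ℝ × ℝ) :=
  {p | p.1 ^ 2 + p.2.1 ^ 2 + p.2.2 ^ 2 ≤ δ ^ 2 ∧ z ≤ p.1}

theorem isClosed_sphericalCap (δ z : ℝ) : IsClosed (sphericalCap δ z) :=
  show IsClosed ({p : ℝ × ℝ × ℝ | p.1 ^ 2 + p.2.1 ^ 2 + p.2.2 ^ 2 ≤ δ ^ 2} ∩ {p | z ≤ p.1}) from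
  (isClosed_le (by fun_prop) continuous_const).inter (isClosed_le continuous_const (by fun_prop))

theorem isCompact_sphericalCap (δ z : ℝ) : IsCompact (sphericalCap δ z) := by
  refine (isCompact_Icc (a := -(|δ|, |δ|, |δ|)) (b := (|δ|, |δ|, |δ|))).of_isClosed_subset
    (isClosed_sphericalCap δ z) ?_
  rintro ⟨t, x, y⟩ ⟨hball, -⟩
  have bound : ∀ c : ℝ, c ^ 2 ≤ δ ^ 2 → -|δ| ≤ c ∧ c ≤ |δ| := fun c hc =>
    abs_le_of_sq_le_sq' (by rwa [sq_abs]) (abs_nonneg δ)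
  obtain ⟨ht₁, ht₂⟩ := bound t (by nlinarith)
  obtain ⟨hx₁, hx₂⟩ := bound x (by nlinarith)
  obtain ⟨hy₁, hy₂⟩ := bound y (by nlinarith)
  exact ⟨⟨ht₁, hx₁, hy₁⟩, ⟨ht₂, hx₂, hy₂⟩⟩

theorem sphericalCap_slice_of_mem {δ z t : ℝ} (ht : t ∈ Icc z δ) :
    Prod.mk t ⁻¹' sphericalCap δ z = {q : ℝ × ℝ | q.1 ^ 2 + q.2 ^ 2 ≤ δ ^ 2 - t ^ 2} := by
  ext q
  simp only [sphericalCap, mem_preimage, mem_ofPred_eq, ht.1, and_true]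
  constructor <;> intro h <;> linarith

theorem sphericalCap_slice_of_notMem {δ z t : ℝ} (hδ : 0 ≤ δ) (ht : t ∉ Icc z δ) :
    Prod.mk t ⁻¹' sphericalCap δ z = ∅ := by
  refine eq_empty_of_forall_notMem fun q ⟨hball, hz⟩ => ht ⟨hz, ?_⟩
  exact (abs_le_of_sq_le_sq' (by nlinarith) hδ).2

theorem integral_slice_sphericalCap {δ z : ℝ} (hz : -δ ≤ z) (hzδ : z ≤ δ) (t : ℝ) :
    ∫ q : ℝ × ℝ, (sphericalCap δ z).indicator
        (fun p => p.1 ^ 2 + p.2.1 ^ 2 + p.2.2 ^ 2) (t, q)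
      = (Icc z δ).indicator (fun t => π / 2 * (δ ^ 4 - t ^ 4)) t := by
  have hslice : MeasurableSet (Prod.mk t ⁻¹' sphericalCap δ z) :=
    measurable_prodMk_left (isClosed_sphericalCap δ z).measurableSet
  simp_rw [← indicator_comp_right (Prod.mk t), Function.comp_def]
  rw [integral_indicator hslice]
  by_cases ht : t ∈ Icc z δ
  · rw [indicator_of_mem ht, sphericalCap_slice_of_mem ht,
      setIntegral_disk _ _ (by nlinarith [ht.1, ht.2])]
    ring
  · rw [indicator_of_notMem ht, sphericalCap_slice_of_notMem (by linarith) ht,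
      Measure.restrict_empty, integral_zero_measure]

theorem setIntegral_sphericalCap {δ z : ℝ} (hz : -δ ≤ z) (hzδ : z ≤ δ) :
    ∫ p in sphericalCap δ z, p.1 ^ 2 + p.2.1 ^ 2 + p.2.2 ^ 2
      = π / 2 * (4 * δ ^ 5 / 5 - δ ^ 4 * z + z ^ 5 / 5) := by
  have hintegrable : Integrable ((sphericalCap δ z).indicator
      fun p : ℝ × ℝ × ℝ => p.1 ^ 2 + p.2.1 ^ 2 + p.2.2 ^ 2) (volume.prod volume) :=
    (integrable_indicator_iff (isClosed_sphericalCap δ z).measurableSet).2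
      ((Continuous.continuousOn (by fun_prop)).integrableOn_compact
        (isCompact_sphericalCap δ z))
  have hF : ∀ x ∈ uIcc z δ, HasDerivAt
      (fun t => π / 2 * (δ ^ 4 * t - t ^ 5 / 5)) (π / 2 * (δ ^ 4 - x ^ 4)) x := by
    intro x _
    refine ((((hasDerivAt_id x).const_mul (δ ^ 4)).sub
      ((hasDerivAt_pow 5 x).div_const 5)).const_mul (π / 2)).congr_deriv ?_
    norm_num
  rw [← integral_indicator (isClosed_sphericalCap δ z).measurableSet, Measure.volume_eq_prod,
    integral_prod _ hintegrable]
  simp_rw [integral_slice_sphericalCap hz hzδ]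
  rw [integral_indicator measurableSet_Icc, integral_Icc_eq_integral_Ioc,
    ← intervalIntegral.integral_of_le hzδ, intervalIntegral.integral_eq_sub_of_hasDerivAt hF
      (Continuous.intervalIntegrable (by fun_prop) _ _)]
  ring

def heightFirstEquiv : EuclideanSpace ℝ (Fin 3) ≃ᵐ ℝ × ℝ × ℝ :=
  (MeasurableEquiv.toLp 2 (Fin 3 → ℝ)).symm.trans
    ((MeasurableEquiv.piFinSuccAbove (fun _ : Fin 3 => ℝ) 2).trans
      ((MeasurableEquiv.refl ℝ).prodCongr MeasurableEquiv.finTwoArrow))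

theorem heightFirstEquiv_apply (ξ : EuclideanSpace ℝ (Fin 3)) :
    heightFirstEquiv ξ = (ξ 2, ξ 0, ξ 1) :=
  rfl

theorem measurePreserving_heightFirstEquiv :
    MeasurePreserving heightFirstEquiv volume volume :=
  ((MeasurePreserving.id volume).prod (volume_preserving_finTwoArrow ℝ)).comp
    (volume_preserving_piFinSuccAbove (fun _ : Fin 3 => ℝ) 2) |>.comp
    (EuclideanSpace.volume_preserving_symm_measurableEquiv_toLp (Fin 3))

theorem norm_sq_eq_heightFirstEquiv (ξ : EuclideanSpace ℝ (Fin 3)) :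
    ‖ξ‖ ^ 2 = (heightFirstEquiv ξ).1 ^ 2 + (heightFirstEquiv ξ).2.1 ^ 2
      + (heightFirstEquiv ξ).2.2 ^ 2 := by
  simp only [EuclideanSpace.norm_sq_eq, Fin.sum_univ_three, Real.norm_eq_abs, sq_abs,
    heightFirstEquiv_apply]
  ring

theorem preimage_heightFirstEquiv_sphericalCap {δ : ℝ} (hδ : 0 ≤ δ) (z : ℝ) :
    heightFirstEquiv ⁻¹' sphericalCap δ z
      = {ξ : EuclideanSpace ℝ (Fin 3) | ‖ξ‖ ≤ δ ∧ z ≤ ξ 2} := by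
  ext ξ
  simp only [sphericalCap, mem_preimage, mem_ofPred_eq, ← norm_sq_eq_heightFirstEquiv,
    sq_le_sq₀ (norm_nonneg ξ) hδ]
  rfl

theorem setIntegral_euclideanCap_norm_sq {δ z : ℝ} (hz : -δ ≤ z) (hzδ : z ≤ δ) :
    ∫ ξ in {ξ : EuclideanSpace ℝ (Fin 3) | ‖ξ‖ ≤ δ ∧ z ≤ ξ 2}, ‖ξ‖ ^ 2
      = π / 2 * (4 * δ ^ 5 / 5 - δ ^ 4 * z + z ^ 5 / 5) := by
  simp_rw [norm_sq_eq_heightFirstEquiv]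
  rw [← preimage_heightFirstEquiv_sphericalCap (by linarith) z,
    measurePreserving_heightFirstEquiv.setIntegral_preimage_emb
      heightFirstEquiv.measurableEmbedding (fun p => p.1 ^ 2 + p.2.1 ^ 2 + p.2.2 ^ 2)]
  exact setIntegral_sphericalCap hz hzδ

theorem setIntegral_euclideanCap_div_ball {δ z : ℝ} (hδ : 0 < δ) (hz : -δ ≤ z) (hzδ : z ≤ δ) :
    (∫ ξ in {ξ : EuclideanSpace ℝ (Fin 3) | ‖ξ‖ ≤ δ ∧ z ≤ ξ 2}, ‖ξ‖ ^ 2) /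
      (∫ ξ in {ξ : EuclideanSpace ℝ (Fin 3) | ‖ξ‖ ≤ δ}, ‖ξ‖ ^ 2) = capMomentRatio (z / δ) := by
  have hball : {ξ : EuclideanSpace ℝ (Fin 3) | ‖ξ‖ ≤ δ} = {ξ | ‖ξ‖ ≤ δ ∧ -δ ≤ ξ 2} := by
    ext ξ
    refine ⟨fun h => ⟨h, ?_⟩, And.left⟩
    exact (abs_le.1 ((PiLp.norm_apply_le ξ 2).trans h)).1
  rw [hball, setIntegral_euclideanCap_norm_sq hz hzδ,
    setIntegral_euclideanCap_norm_sq le_rfl (by linarith), capMomentRatio]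
  field_simp
  ring

end

theorem critical_stretch_energy_balance (δ κ μ₀ Gc : ℝ) (hδ : 0 < δ)
    (hD : 0 < (9 * κ - 15 * μ₀) * (125 * δ / 1848) + 15 * μ₀ * (5 * δ / 24))
    (hGc : 0 ≤ Gc)
    (sc : ℝ)
    (hsc : sc = Real.sqrt (Gc /
      ((9 * κ - 15 * μ₀) * (125 * δ / 1848) + 15 * μ₀ * (5 * δ / 24))))
    (ϖ : ℝ → ℝ)
    (hϖ : ∀ z ∈ Set.Icc (0:ℝ) δ,
      ϖ z = (∫ ξ in {ξ : EuclideanSpace ℝ (Fin 3) | ‖ξ‖ ≤ δ ∧ z ≤ ξ 2}, ‖ξ‖ ^ 2) /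
        (∫ ξ in {ξ : EuclideanSpace ℝ (Fin 3) | ‖ξ‖ ≤ δ}, ‖ξ‖ ^ 2)) :
    2 * ∫ z in (0:ℝ)..δ,
        (3 / 2) * ((3 * κ - 5 * μ₀) * (ϖ z) ^ 2 + 5 * μ₀ * ϖ z) * sc ^ 2
      = Gc := by
  have hϖ_eq : ∀ z ∈ uIcc 0 δ, ϖ z = capMomentRatio (z / δ) := by
    intro z hz
    rw [uIcc_of_le hδ.le] at hz
    rw [hϖ z hz, setIntegral_euclideanCap_div_ball hδ (by linarith [hz.1]) hz.2]
  have hsc_sq : sc ^ 2 = Gc /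
      ((9 * κ - 15 * μ₀) * (125 * δ / 1848) + 15 * μ₀ * (5 * δ / 24)) := by
    rw [hsc, sq_sqrt (div_nonneg hGc hD.le)]
  have hβ : ∫ z in (0 : ℝ)..δ, (3 * κ - 5 * μ₀) * ϖ z ^ 2 + 5 * μ₀ * ϖ z
      = ((3 * κ - 5 * μ₀) * (125 / 1848) + 5 * μ₀ * (5 / 24)) * δ := by
    rw [← integral_capMomentRatio_combination]
    exact intervalIntegral.integral_congr fun z hz => by simp only [hϖ_eq z hz]
  rw [intervalIntegral.integral_mul_const, intervalIntegral.integral_const_mul, hβ, hsc_sq]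
  calc _ = Gc / ((9 * κ - 15 * μ₀) * (125 * δ / 1848) + 15 * μ₀ * (5 * δ / 24))
        * ((9 * κ - 15 * μ₀) * (125 * δ / 1848) + 15 * μ₀ * (5 * δ / 24)) := by ring
    _ = Gc := div_mul_cancel₀ Gc hD.ne'
end
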